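/- arXiv:2303.05129 — 3 statements merged into one kernel-verified Lean document; each statement's English description precedes it below -/
import Mathlib

section
/- Let (Λ, k) be a basis element and i ≥ −1 an integer. If lev_i(Λ, k) ≤ i, then WD(Λ, k) ≤ n − 1, and WD(Λ, k) = n − 1 if and only if Λ is the zero partition and k = 1. -/
/-- Weight of a partition (finitely supported sequence of multiplicities). -/
def wt (Λ : ℕ →₀ ℕ) : ℕ := Λ.sum fun m c => m * c

/-- Degree (number of parts, with multiplicity) of a partition. -/
def deg (Λ : ℕ →₀ ℕ) : ℕ := Λ.sum fun _ c => c

/-- Basis element of the integral Lie ring of partitions: a pair (Λ, k) with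
1 ≤ k ≤ n and all parts of Λ in {1,…,k-1}. -/
def IsBasisElt (n : ℕ) (Λ : ℕ →₀ ℕ) (k : ℕ) : Prop :=
  1 ≤ k ∧ k ≤ n ∧ Λ 0 = 0 ∧ ∀ m, k ≤ m → Λ m = 0

/-- The weight-degree function. -/
def WD (n : ℕ) (Λ : ℕ →₀ ℕ) (k : ℕ) : ℤ :=
  (wt Λ : ℤ) - (deg Λ : ℤ) + (n : ℤ) - (k : ℤ)

/-- h_i = ⌊(i-1)/(n-1)⌋ + 1. -/
def hh (n : ℕ) (i : ℤ) : ℤ := (i - 1).fdiv ((n : ℤ) - 1) + 1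

/-- r_i = i - (h_i - 1)(n-1). -/
def rr (n : ℕ) (i : ℤ) : ℤ := i - (hh n i - 1) * ((n : ℤ) - 1)

/-- The i-th level function lev_i(Λ,k) = h_i·WD(Λ,k) + deg(Λ) - 1. -/
def lev (n : ℕ) (i : ℤ) (Λ : ℕ →₀ ℕ) (k : ℕ) : ℤ :=
  hh n i * WD n Λ k + (deg Λ : ℤ) - 1

/-- N_i = set of basis elements with lev_j ≤ j for some -1 ≤ j ≤ i. -/
def Nset (n : ℕ) (i : ℤ) : Set ((ℕ →₀ ℕ) × ℕ) :=
  {p | IsBasisElt n p.1 p.2 ∧ ∃ j : ℤ, -1 ≤ j ∧ j ≤ i ∧ lev n j p.1 p.2 ≤ j}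

/-- L_i = set of basis elements for which i is the least index j ≥ -1 with lev_j = j. -/
def Lset (n : ℕ) (i : ℤ) : Set ((ℕ →₀ ℕ) × ℕ) :=
  {p | IsBasisElt n p.1 p.2 ∧ lev n i p.1 p.2 = i ∧
    ∀ j : ℤ, -1 ≤ j → lev n j p.1 p.2 = j → i ≤ j}

/-- The partition function p(s). -/
def pfun (s : ℕ) : ℕ := Fintype.card (Nat.Partition s)

/-- b_m = Σ_{s=0}^m p(s). -/
def bnat (m : ℕ) : ℕ := ∑ s ∈ Finset.range (m + 1), pfun s

/-- c_m = Σ_{s=0}^m b_s. -/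
def cnat (m : ℕ) : ℕ := ∑ s ∈ Finset.range (m + 1), bnat s

/-- b extended to ℤ, with b_m = 0 for m < 0. -/
def bint (m : ℤ) : ℕ := if m < 0 then 0 else bnat m.toNat

/-- The period map per(Λ,k) = (Λ + (n-1-WD(Λ,k))·e₁, k). -/
noncomputable def per (n : ℕ) (p : (ℕ →₀ ℕ) × ℕ) : (ℕ →₀ ℕ) × ℕ :=
  (p.1 + Finsupp.single 1 (((n : ℤ) - 1 - WD n p.1 p.2).toNat), p.2)

/-
If Λ = 0 then WD(Λ, k) = n − k, and everything is immediate. Otherwise deg Λ ≥ 1, and since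
i ≤ h_i (n − 1) with h_i ≥ 0, the assumption WD(Λ, k) ≥ n − 1 would give
h_i · WD + deg − 1 ≤ i ≤ h_i · WD, i.e. deg Λ = 1. A single part is at most k − 1, so then
WD = wt − 1 + n − k ≤ n − 2, a contradiction. Hence WD < n − 1 whenever Λ ≠ 0.
-/

lemma deg_eq_zero_iff {Λ : ℕ →₀ ℕ} : deg Λ = 0 ↔ Λ = 0 :=
  Finsupp.degree_eq_zero_iff Λ

lemma wt_add_deg_le_mul_deg {Λ : ℕ →₀ ℕ} {k : ℕ} (hΛ : ∀ m, k ≤ m → Λ m = 0) :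
    wt Λ + deg Λ ≤ k * deg Λ := by
  rw [wt, deg, ← Finsupp.sum_add, mul_comm, Finsupp.sum_mul]
  refine Finsupp.sum_le_sum fun m hm => ?_
  have hmk : m < k := by
    by_contra! hkm
    exact Finsupp.mem_support_iff.mp hm (hΛ m hkm)
  nlinarith

lemma WD_zero (n k : ℕ) : WD n 0 k = n - k := by
  simp [WD, wt, deg]

lemma le_hh_mul {n : ℕ} (hn : 2 ≤ n) (i : ℤ) : i ≤ hh n i * (n - 1) := by
  have hpos : (0 : ℤ) < n - 1 := by omega
  have := Int.lt_ediv_add_one_mul_self (i - 1) hpos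
  rw [hh, Int.fdiv_eq_ediv_of_nonneg _ hpos.le]
  omega

lemma hh_nonneg {n : ℕ} (hn : 3 ≤ n) {i : ℤ} (hi : -1 ≤ i) : 0 ≤ hh n i := by
  have := le_hh_mul (n := n) (by omega) i
  by_contra! hneg
  nlinarith

lemma WD_lt_of_lev_le {n : ℕ} (hn : 3 ≤ n) {Λ : ℕ →₀ ℕ} {k : ℕ} (hΛ : ∀ m, k ≤ m → Λ m = 0)
    (hΛ0 : Λ ≠ 0) {i : ℤ} (hi : -1 ≤ i) (hlev : lev n i Λ k ≤ i) :
    WD n Λ k < n - 1 := by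
  have hdeg : 1 ≤ deg Λ := Nat.one_le_iff_ne_zero.mpr (mt deg_eq_zero_iff.mp hΛ0)
  have hwt : (wt Λ + deg Λ : ℤ) ≤ k * deg Λ := by exact_mod_cast wt_add_deg_le_mul_deg hΛ
  by_contra! hWD
  have hlevel : hh n i * (n - 1) ≤ hh n i * WD n Λ k :=
    mul_le_mul_of_nonneg_left hWD (hh_nonneg hn hi)
  have hdeg1 : (deg Λ : ℤ) = 1 := by
    have := le_hh_mul (n := n) (by omega) i
    rw [lev] at hlev
    omega
  rw [hdeg1] at hwt
  rw [WD] at hWD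
  omega

theorem stmt1 (n : ℕ) (hn : 3 ≤ n) (Λ : ℕ →₀ ℕ) (k : ℕ) (h : IsBasisElt n Λ k)
    (i : ℤ) (hi : -1 ≤ i) (hlev : lev n i Λ k ≤ i) :
    WD n Λ k ≤ (n : ℤ) - 1 ∧ (WD n Λ k = (n : ℤ) - 1 ↔ Λ = 0 ∧ k = 1) := by
  obtain ⟨hk1, -, -, hΛ⟩ := h
  rcases eq_or_ne Λ 0 with rfl | hΛ0
  · simp only [WD_zero, true_and]
    omega
  · have hWD := WD_lt_of_lev_le hn hΛ hΛ0 hi hlev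
    exact ⟨hWD.le, by simp [hΛ0, hWD.ne]⟩
end

section
/- Let (Λ, k) be a basis element. If lev_i(Λ, k) ≤ i for some integer i ≥ −1, then there exists an integer j with −1 ≤ j ≤ i such that lev_j(Λ, k) = j. -/
/-!
Since parts are at least 1 and k ≤ n, WD(Λ, k) ≥ 0; as h_i is monotone in i, so is i ↦ lev_i(Λ, k).
For n ≥ 3 we have h_{-1} = 0, hence lev_{-1} = deg Λ - 1 ≥ -1. Together with lev_i ≤ i, the
monotone map j ↦ lev_j sends the interval [-1, i] into itself, and the Knaster–Tarski argument
(take the supremum of the points with j ≤ lev_j) gives a fixed point there.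
-/

theorem Monotone.exists_mem_Icc_isFixedPt {α : Type*} [ConditionallyCompleteLattice α]
    {f : α → α} (hf : Monotone f) {a b : α} (hab : a ≤ b) (ha : a ≤ f a) (hb : f b ≤ b) :
    ∃ x ∈ Set.Icc a b, Function.IsFixedPt f x := by
  set S := {y ∈ Set.Icc a b | y ≤ f y}
  have hS : S.Nonempty := ⟨a, ⟨le_rfl, hab⟩, ha⟩
  have hSb : BddAbove S := ⟨b, fun y hy => hy.1.2⟩
  have hx : sSup S ∈ Set.Icc a b :=
    ⟨le_csSup hSb ⟨⟨le_rfl, hab⟩, ha⟩, csSup_le hS fun y hy => hy.1.2⟩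
  have hxf : sSup S ≤ f (sSup S) :=
    csSup_le hS fun y hy => hy.2.trans (hf (le_csSup hSb hy))
  have hfx : f (sSup S) ∈ S :=
    ⟨⟨hx.1.trans hxf, (hf hx.2).trans hb⟩, hf hxf⟩
  exact ⟨sSup S, hx, le_antisymm (le_csSup hSb hfx) hxf⟩

lemma deg_le_wt {Λ : ℕ →₀ ℕ} (h0 : Λ 0 = 0) : deg Λ ≤ wt Λ := by
  refine Finset.sum_le_sum fun m hm => Nat.le_mul_of_pos_left _ (Nat.pos_of_ne_zero ?_)
  rintro rfl
  exact Finsupp.mem_support_iff.mp hm h0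

lemma WD_nonneg {n k : ℕ} {Λ : ℕ →₀ ℕ} (h0 : Λ 0 = 0) (hkn : k ≤ n) : 0 ≤ WD n Λ k := by
  have := deg_le_wt h0
  unfold WD
  omega

lemma hh_mono {n : ℕ} (hn : 2 ≤ n) : Monotone (hh n) := by
  have hd : (0 : ℤ) < n - 1 := by omega
  intro a b hab
  simp only [hh, Int.fdiv_eq_ediv_of_nonneg _ hd.le]
  have := Int.ediv_le_ediv hd (show a - 1 ≤ b - 1 by omega)
  omega

lemma hh_neg_one {n : ℕ} (hn : 3 ≤ n) : hh n (-1) = 0 := by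
  have hd : (0 : ℤ) ≤ n - 1 := by omega
  rw [hh, Int.fdiv_eq_ediv_of_nonneg _ hd, Int.ediv_eq_neg_one_of_neg_of_le (by norm_num) (by omega)]
  norm_num

lemma lev_mono {n k : ℕ} {Λ : ℕ →₀ ℕ} (hn : 2 ≤ n) (h0 : Λ 0 = 0) (hkn : k ≤ n) :
    Monotone fun i => lev n i Λ k := fun a b hab => by
  have := mul_le_mul_of_nonneg_right (hh_mono hn hab) (WD_nonneg h0 hkn)
  simp only [lev]
  linarith

lemma lev_neg_one {n k : ℕ} {Λ : ℕ →₀ ℕ} (hn : 3 ≤ n) : lev n (-1) Λ k = deg Λ - 1 := by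
  simp [lev, hh_neg_one hn]

theorem stmt3 (n : ℕ) (hn : 3 ≤ n) (Λ : ℕ →₀ ℕ) (k : ℕ) (h : IsBasisElt n Λ k)
    (i : ℤ) (hi : -1 ≤ i) (hlev : lev n i Λ k ≤ i) :
    ∃ j : ℤ, -1 ≤ j ∧ j ≤ i ∧ lev n j Λ k = j := by
  obtain ⟨-, hkn, h0, -⟩ := h
  have hstart : -1 ≤ lev n (-1) Λ k := by rw [lev_neg_one hn]; omega
  obtain ⟨j, ⟨hj₁, hj₂⟩, hfix⟩ :=
    (lev_mono (by omega) h0 hkn).exists_mem_Icc_isFixedPt hi hstart hlev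
  exact ⟨j, hj₁, hj₂, hfix⟩
end

section
/- Suppose (Λ, k) and (Θ, u) are basis elements with u < k and λ_u ≥ 1 (so that the Lie bracket [x^Λ ∂_k, x^Θ ∂_u] = λ_u x^Γ ∂_k is nonzero, where Γ = Λ − e_u + Θ, with e_u the indicator of part u). Then WD(Γ, k) = WD(Λ, k) + WD(Θ, u) − (n − 1) and, for every i ≥ −1, lev_i(Γ, k) = lev_i(Λ, k) + lev_i(Θ, u) − h_i(n − 1). -/
/-!
Both `wt` and `deg` are additive, and removing one part `u` from `Λ + Θ` lowers the weight
by `u` and the degree by `1`. In `WD (Λ, k) + WD (Θ, u)` the term `- u` of `WD (Θ, u)` cancels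
that loss of weight, and its extra `n` together with the lost part's `+ 1` is the `n - 1`.
Since `lev_i` is affine in `(WD, deg)` with slope `h_i`, the level identity follows.
-/

open Finsupp

lemma wt_add (A B : ℕ →₀ ℕ) : wt (A + B) = wt A + wt B :=
  sum_add_index' (fun m => mul_zero m) (fun m c d => mul_add m c d)

lemma deg_add (A B : ℕ →₀ ℕ) : deg (A + B) = deg A + deg B :=
  sum_add_index' (fun _ => rfl) (fun _ _ _ => rfl)

lemma wt_single (u c : ℕ) : wt (single u c) = u * c :=
  sum_single_index (mul_zero u)

lemma deg_single (u c : ℕ) : deg (single u c) = c :=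
  sum_single_index rfl

section RemovePart

variable {Γ : ℕ →₀ ℕ} {u : ℕ}

lemma wt_tsub_single_one (h : single u 1 ≤ Γ) :
    (wt (Γ - single u 1) : ℤ) = wt Γ - u := by
  have := congrArg wt (tsub_add_cancel_of_le h)
  rw [wt_add, wt_single, mul_one] at this
  omega

lemma deg_tsub_single_one (h : single u 1 ≤ Γ) :
    (deg (Γ - single u 1) : ℤ) = deg Γ - 1 := by
  have := congrArg deg (tsub_add_cancel_of_le h)
  rw [deg_add, deg_single] at this
  omega

end RemovePart

section Bracket

variable (n : ℕ) {Λ Θ : ℕ →₀ ℕ} {u : ℕ} (k : ℕ)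

lemma WD_add_tsub_single_one (h : single u 1 ≤ Λ + Θ) :
    WD n (Λ + Θ - single u 1) k = WD n Λ k + WD n Θ u - ((n : ℤ) - 1) := by
  unfold WD
  rw [wt_tsub_single_one h, deg_tsub_single_one h, wt_add, deg_add]
  push_cast
  ring

lemma lev_add_tsub_single_one (i : ℤ) (h : single u 1 ≤ Λ + Θ) :
    lev n i (Λ + Θ - single u 1) k = lev n i Λ k + lev n i Θ u - hh n i * ((n : ℤ) - 1) := by
  unfold lev
  rw [WD_add_tsub_single_one n k h, deg_tsub_single_one h, deg_add]
  push_cast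
  ring

end Bracket

theorem stmt6_general (n : ℕ) (Λ Θ : ℕ →₀ ℕ) (k u : ℕ)
    (hu : 1 ≤ Λ u) :
    WD n (Λ + Θ - Finsupp.single u 1) k = WD n Λ k + WD n Θ u - ((n : ℤ) - 1) ∧
    ∀ i : ℤ, -1 ≤ i →
      lev n i (Λ + Θ - Finsupp.single u 1) k =
        lev n i Λ k + lev n i Θ u - hh n i * ((n : ℤ) - 1) := by
  have h : single u 1 ≤ Λ + Θ := single_le_iff.mpr (hu.trans (by simp))
  exact ⟨WD_add_tsub_single_one n k h, fun i _ => lev_add_tsub_single_one n k i h⟩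

theorem stmt6 (n : ℕ) (hn : 3 ≤ n) (Λ Θ : ℕ →₀ ℕ) (k u : ℕ)
    (hΛ : IsBasisElt n Λ k) (hΘ : IsBasisElt n Θ u) (huk : u < k) (hu : 1 ≤ Λ u) :
    WD n (Λ + Θ - Finsupp.single u 1) k = WD n Λ k + WD n Θ u - ((n : ℤ) - 1) ∧
    ∀ i : ℤ, -1 ≤ i →
      lev n i (Λ + Θ - Finsupp.single u 1) k =
        lev n i Λ k + lev n i Θ u - hh n i * ((n : ℤ) - 1) :=
  stmt6_general n Λ Θ k u hu
end
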